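/- Chemin's moment interpolation inequality (Lemma 3.8): Let n ≥ 1 and γ > 1. For every measurable f : ℝⁿ → ℝ with f ∈ L¹(ℝⁿ, dx) ∩ L^γ(ℝⁿ, dx) and ∫|x|²|f(x)| dx < ∞, one has ‖f‖_{L¹(ℝⁿ)} ≤ C₈ ‖f‖_{L^γ(ℝⁿ)}^{2γ/((n+2)γ−n)} (∫_{ℝⁿ}|x|²|f(x)| dx)^{n(γ−1)/((n+2)γ−n)}, where C₈ = 2(π^{n/2}/Γ(n/2 + 1))^{2(γ−1)/((n+2)γ−n)}. -/

import Mathlib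

/-!
Split `∫ |f|` at the sphere of radius `R`. On the ball, Hölder's inequality against the indicator
of the ball gives at most `ωₙ^{(γ-1)/γ} ‖f‖_γ R^{n(γ-1)/γ}`; outside it, `|f x| ≤ ‖x‖² |f x| / R²`.
Choosing `R` so that the two terms are equal yields the bound, with the factor `2` counting the
two equal terms.
-/

open MeasureTheory Real

noncomputable section

/-- The space `ℝⁿ`. -/
abbrev Spc (n : ℕ) := EuclideanSpace ℝ (Fin n)

/-- `ωₙ = π^{n/2}/Γ(n/2+1)`, the Lebesgue measure of the unit ball in `ℝⁿ`. -/
def unitBallVol (n : ℕ) : ℝ := Real.pi ^ ((n : ℝ) / 2) / Real.Gamma ((n : ℝ) / 2 + 1)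

open Filter Topology Metric

lemma mul_div_rpow_eq_rpow_mul_rpow {a b s t : ℝ} (ha : 0 < a) (hb : 0 < b) (hst : s + t = 1) :
    a * (b / a) ^ t = a ^ s * b ^ t := by
  calc a * (b / a) ^ t = a ^ (s + t) * (b ^ t / a ^ t) := by
        rw [hst, rpow_one, div_rpow hb.le ha.le]
    _ = a ^ s * b ^ t := by
        rw [rpow_add ha]
        field_simp [(rpow_pos_of_pos ha t).ne']

/-- The radius `R = (b / a) ^ (1 / (α + β))` makes the two terms equal. -/
lemma le_two_mul_rpow_mul_rpow_of_pos {I a b α β : ℝ} (ha : 0 < a) (hb : 0 < b) (hα : 0 ≤ α)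
    (hβ : 0 < β) (h : ∀ R : ℝ, 0 < R → I ≤ a * R ^ α + b / R ^ β) :
    I ≤ 2 * a ^ (β / (α + β)) * b ^ (α / (α + β)) := by
  have hαβ : 0 < α + β := by linarith
  have hst : β / (α + β) + α / (α + β) = 1 := by field_simp; ring
  have hba : 0 < b / a := div_pos hb ha
  have hRα : ((b / a) ^ (α + β)⁻¹) ^ α = (b / a) ^ (α / (α + β)) := by
    rw [← rpow_mul hba.le, inv_mul_eq_div]
  have hRβ : ((b / a) ^ (α + β)⁻¹) ^ β = ((a / b) ^ (β / (α + β)))⁻¹ := by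
    rw [← rpow_mul hba.le, inv_mul_eq_div, ← inv_div a b, inv_rpow (div_pos ha hb).le]
  have := h ((b / a) ^ (α + β)⁻¹) (rpow_pos_of_pos hba _)
  rw [hRα, hRβ, div_inv_eq_mul, mul_div_rpow_eq_rpow_mul_rpow ha hb hst,
    mul_div_rpow_eq_rpow_mul_rpow hb ha ((add_comm _ _).trans hst)] at this
  linarith

lemma le_two_mul_rpow_mul_rpow_of_forall {I a b α β : ℝ} (ha : 0 ≤ a) (hb : 0 ≤ b) (hα : 0 ≤ α)
    (hβ : 0 < β) (h : ∀ R : ℝ, 0 < R → I ≤ a * R ^ α + b / R ^ β) :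
    I ≤ 2 * a ^ (β / (α + β)) * b ^ (α / (α + β)) := by
  have hαβ : 0 < α + β := by linarith
  have hcont : Continuous fun ε : ℝ => 2 * (a + ε) ^ (β / (α + β)) * (b + ε) ^ (α / (α + β)) := by
    have hs := continuous_rpow_const (div_pos hβ hαβ).le
    have ht := continuous_rpow_const (div_nonneg hα hαβ.le)
    fun_prop
  -- the degenerate cases `a = 0` or `b = 0` follow by letting `a + ε, b + ε` tend to `a, b`
  have hlim := (hcont.tendsto 0).mono_left (nhdsWithin_le_nhds (s := Set.Ioi 0))
  simp only [add_zero] at hlim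
  refine ge_of_tendsto hlim (eventually_mem_nhdsWithin.mono fun ε (hε : 0 < ε) => ?_)
  refine le_two_mul_rpow_mul_rpow_of_pos (by linarith) (by linarith) hα hβ fun R hR => ?_
  have hRα := rpow_nonneg hR.le α
  have hRβ := rpow_pos_of_pos hR β
  calc I ≤ a * R ^ α + b / R ^ β := h R hR
    _ ≤ (a + ε) * R ^ α + (b + ε) / R ^ β := by gcongr <;> linarith

lemma setIntegral_abs_le_rpow_measureReal {X : Type*} [MeasurableSpace X] {μ : Measure X}
    {f : X → ℝ} {p : ℝ} {s : Set X} (hp : 1 < p) (hs : μ s ≠ ⊤)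
    (hf : MemLp f (ENNReal.ofReal p) μ) :
    ∫ x in s, |f x| ∂μ ≤ (∫ x, |f x| ^ p ∂μ) ^ (1 / p) * μ.real s ^ ((p - 1) / p) := by
  have : IsFiniteMeasure (μ.restrict s) := isFiniteMeasure_restrict.mpr hs
  have hpq : p.HolderConjugate (p / (p - 1)) := .conjExponent hp
  have hf_abs : MemLp (fun x => |f x|) (ENNReal.ofReal p) (μ.restrict s) := hf.restrict s |>.abs
  have holder := integral_mul_le_Lp_mul_Lq_of_nonneg hpq (ae_of_all _ fun x => abs_nonneg (f x))
    (ae_of_all _ fun _ => zero_le_one) hf_abs (memLp_const (1 : ℝ))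
  have hp_integrable : Integrable (fun x => |f x| ^ p) μ := by
    simpa [ENNReal.toReal_ofReal (by linarith : 0 ≤ p)] using
      hf.integrable_norm_rpow (by simp; linarith) ENNReal.ofReal_ne_top
  have hq : 1 / (p / (p - 1)) = (p - 1) / p := one_div_div _ _
  simp only [mul_one, one_rpow, setIntegral_const, smul_eq_mul, hq] at holder
  have h_nonneg (x : X) : 0 ≤ |f x| ^ p := rpow_nonneg (abs_nonneg _) p
  refine holder.trans (mul_le_mul_of_nonneg_right ?_ (by positivity))
  exact rpow_le_rpow (integral_nonneg h_nonneg)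
    (setIntegral_le_integral hp_integrable (ae_of_all _ h_nonneg)) (by positivity)

lemma setIntegral_compl_closedBall_abs_le {E : Type*} [NormedAddCommGroup E] [MeasurableSpace E]
    [OpensMeasurableSpace E] {μ : Measure E} {f : E → ℝ} {R : ℝ} (hR : 0 < R)
    (hf : Integrable f μ) (hf2 : Integrable (fun x => ‖x‖ ^ 2 * |f x|) μ) :
    ∫ x in (closedBall 0 R)ᶜ, |f x| ∂μ ≤ (∫ x, ‖x‖ ^ 2 * |f x| ∂μ) / R ^ 2 := by
  have h_moment_nonneg (x : E) : 0 ≤ ‖x‖ ^ 2 * |f x| := by positivity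
  calc ∫ x in (closedBall 0 R)ᶜ, |f x| ∂μ
      ≤ ∫ x in (closedBall 0 R)ᶜ, ‖x‖ ^ 2 * |f x| / R ^ 2 ∂μ := by
        refine setIntegral_mono_on hf.abs.integrableOn (hf2.div_const _).integrableOn
          measurableSet_closedBall.compl fun x hx => ?_
        have hxR : R < ‖x‖ := by simpa using hx
        rw [le_div_iff₀ (by positivity), mul_comm]
        gcongr
    _ = (∫ x in (closedBall 0 R)ᶜ, ‖x‖ ^ 2 * |f x| ∂μ) / R ^ 2 := integral_div _ _
    _ ≤ (∫ x, ‖x‖ ^ 2 * |f x| ∂μ) / R ^ 2 := div_le_div_of_nonneg_right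
        (setIntegral_le_integral hf2 (ae_of_all _ h_moment_nonneg)) (by positivity)

lemma unitBallVol_nonneg (n : ℕ) : 0 ≤ unitBallVol n := by
  unfold unitBallVol
  positivity

lemma measureReal_closedBall_eq_unitBallVol {n : ℕ} (hn : 1 ≤ n) (x : Spc n) {R : ℝ} (hR : 0 ≤ R) :
    volume.real (closedBall x R) = R ^ n * unitBallVol n := by
  have : Nonempty (Fin n) := ⟨⟨0, hn⟩⟩
  have h_sqrt_pi : √π ^ n = π ^ ((n : ℝ) / 2) := by
    rw [sqrt_eq_rpow, ← rpow_natCast, ← rpow_mul pi_pos.le, one_div_mul_eq_div]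
  rw [measureReal_def, EuclideanSpace.volume_closedBall, Fintype.card_fin, ENNReal.toReal_mul,
    ENNReal.toReal_pow, ENNReal.toReal_ofReal hR, ENNReal.toReal_ofReal (by positivity),
    h_sqrt_pi, unitBallVol]

lemma integral_abs_le_ball_add_tail {n : ℕ} (hn : 1 ≤ n) {γ : ℝ} (hγ : 1 < γ) {f : Spc n → ℝ}
    (hf1 : Integrable f) (hfγ : MemLp f (ENNReal.ofReal γ))
    (hf2 : Integrable (fun x => ‖x‖ ^ 2 * |f x|)) {R : ℝ} (hR : 0 < R) :
    ∫ x, |f x| ≤ unitBallVol n ^ ((γ - 1) / γ) * (∫ x, |f x| ^ γ) ^ (1 / γ)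
        * R ^ ((n : ℝ) * (γ - 1) / γ) + (∫ x, ‖x‖ ^ 2 * |f x|) / R ^ (2 : ℝ) := by
  have h_ball := setIntegral_abs_le_rpow_measureReal hγ measure_closedBall_lt_top.ne hfγ
    (s := closedBall (0 : Spc n) R)
  have h_vol : (R ^ n * unitBallVol n) ^ ((γ - 1) / γ)
      = unitBallVol n ^ ((γ - 1) / γ) * R ^ ((n : ℝ) * (γ - 1) / γ) := by
    rw [mul_rpow (by positivity) (unitBallVol_nonneg n), ← rpow_natCast,
      ← rpow_mul hR.le, mul_comm, mul_div_assoc]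
  rw [measureReal_closedBall_eq_unitBallVol hn 0 hR.le, h_vol] at h_ball
  rw [← integral_add_compl measurableSet_closedBall hf1.abs, rpow_two]
  exact add_le_add (h_ball.trans_eq (by ring)) (setIntegral_compl_closedBall_abs_le hR hf1 hf2)

theorem chemin_moment_interpolation_general
    (n : ℕ) (hn : 1 ≤ n) (γ : ℝ) (hγ : 1 < γ)
    (f : Spc n → ℝ)
    (hf1 : Integrable f) (hfγ : MemLp f (ENNReal.ofReal γ))
    (hf2 : Integrable (fun x => ‖x‖ ^ 2 * |f x|)) :
    (∫ x, |f x|)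
      ≤ 2 * unitBallVol n ^ (2 * (γ - 1) / (((n : ℝ) + 2) * γ - (n : ℝ))) *
          ((∫ x, |f x| ^ γ) ^ (1 / γ)) ^ (2 * γ / (((n : ℝ) + 2) * γ - (n : ℝ))) *
          (∫ x, ‖x‖ ^ 2 * |f x|) ^ ((n : ℝ) * (γ - 1) / (((n : ℝ) + 2) * γ - (n : ℝ))) := by
  have hn' : (1 : ℝ) ≤ n := by exact_mod_cast hn
  have hω := unitBallVol_nonneg n
  have hN : 0 ≤ (∫ x, |f x| ^ γ) ^ (1 / γ) :=
    rpow_nonneg (integral_nonneg fun x => rpow_nonneg (abs_nonneg _) _) _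
  have hM : 0 ≤ ∫ x, ‖x‖ ^ 2 * |f x| := integral_nonneg fun x => by positivity
  have h_opt := le_two_mul_rpow_mul_rpow_of_forall (mul_nonneg (rpow_nonneg hω _) hN) hM
    (by positivity) two_pos fun R hR => integral_abs_le_ball_add_tail hn hγ hf1 hfγ hf2 hR
  have hD : 0 < ((n : ℝ) + 2) * γ - n := by nlinarith
  have h_exp₁ : 2 / ((n : ℝ) * (γ - 1) / γ + 2) = 2 * γ / (((n : ℝ) + 2) * γ - n) := by
    field_simp; ring
  have h_exp₂ : (n : ℝ) * (γ - 1) / γ / ((n : ℝ) * (γ - 1) / γ + 2)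
      = (n : ℝ) * (γ - 1) / (((n : ℝ) + 2) * γ - n) := by
    field_simp; ring
  have h_exp₃ : (γ - 1) / γ * (2 * γ / (((n : ℝ) + 2) * γ - n))
      = 2 * (γ - 1) / (((n : ℝ) + 2) * γ - n) := by
    field_simp
  rwa [h_exp₁, h_exp₂, mul_rpow (rpow_nonneg hω _) hN, ← rpow_mul hω, h_exp₃, ← mul_assoc] at h_opt

/-- **Chemin's moment interpolation inequality (Lemma 3.8).**
For `n ≥ 1`, `γ > 1` and `f ∈ L¹(ℝⁿ) ∩ L^γ(ℝⁿ)` with finite second moment,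
`‖f‖_{L¹} ≤ C₈ ‖f‖_{L^γ}^{2γ/((n+2)γ-n)} (∫ |x|²|f(x)| dx)^{n(γ-1)/((n+2)γ-n)}`,
where `C₈ = 2 (π^{n/2}/Γ(n/2+1))^{2(γ-1)/((n+2)γ-n)}`. -/
theorem chemin_moment_interpolation
    (n : ℕ) (hn : 1 ≤ n) (γ : ℝ) (hγ : 1 < γ)
    (f : Spc n → ℝ) (hf_meas : Measurable f)
    (hf1 : Integrable f) (hfγ : MemLp f (ENNReal.ofReal γ))
    (hf2 : Integrable (fun x => ‖x‖ ^ 2 * |f x|)) :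
    (∫ x, |f x|)
      ≤ 2 * unitBallVol n ^ (2 * (γ - 1) / (((n : ℝ) + 2) * γ - (n : ℝ))) *
          ((∫ x, |f x| ^ γ) ^ (1 / γ)) ^ (2 * γ / (((n : ℝ) + 2) * γ - (n : ℝ))) *
          (∫ x, ‖x‖ ^ 2 * |f x|) ^ ((n : ℝ) * (γ - 1) / (((n : ℝ) + 2) * γ - (n : ℝ))) :=
  chemin_moment_interpolation_general n hn γ hγ f hf1 hfγ hf2
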